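/- arXiv:2206.14119 — 2 statements merged into one kernel-verified Lean document; each statement's English description precedes it below -/
import Mathlib

section
/- Let M and N be abelian groups, where M ≅ ⊕_p (F_p ⊕ (ℚ_p/ℤ_p)^{r_p}) and N ≅ ⊕_p (F'_p ⊕ (ℚ_p/ℤ_p)^{r'_p}) with each F_p, F'_p a finite abelian p-group and r_p, r'_p natural numbers (sums over all primes p). Then the abelian group Hom(M, N), with the topology of pointwise convergence (N discrete), is a profinite group. -/
/-!
`M` is torsion, and `N` has finite `n`-torsion for every `n ≠ 0`: a `p`-primary summand has no
`n`-torsion unless `p ∣ n`, and the `n`-torsion of `ℚ_p/ℤ_p` is the image of the compact group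
`ℤ_p` in a discrete group. Hence every homomorphism sends `x` into the finite set `N[ord x]`, and
`Hom(M, N)` is a closed subset of the compact, Hausdorff, totally disconnected product
`∏ₓ N[ord x] ⊆ N^M`.
-/

/-- The Prüfer `p`-group `ℚ_p/ℤ_p`. -/
abbrev PruferGroup (p : ℕ) [Fact p.Prime] : Type :=
  ℚ_[p] ⧸ (PadicInt.subring p).toAddSubgroup

open Topology

def HasFiniteNTorsion (G : Type*) [AddMonoid G] : Prop :=
  ∀ n : ℕ, n ≠ 0 → {x : G | n • x = 0}.Finite

namespace HasFiniteNTorsion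

variable {G H : Type*}

theorem of_finite [AddMonoid G] [Finite G] : HasFiniteNTorsion G :=
  fun _ _ => Set.toFinite _

theorem prod [AddMonoid G] [AddMonoid H] (hG : HasFiniteNTorsion G) (hH : HasFiniteNTorsion H) :
    HasFiniteNTorsion (G × H) := fun n hn =>
  ((hG n hn).prod (hH n hn)).subset fun _ hc => ⟨congrArg Prod.fst hc, congrArg Prod.snd hc⟩

theorem pi {ι : Type*} [Finite ι] {G : ι → Type*} [∀ i, AddMonoid (G i)]
    (h : ∀ i, HasFiniteNTorsion (G i)) : HasFiniteNTorsion (∀ i, G i) := fun n hn =>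
  (Set.Finite.pi fun i => h i n hn).subset fun _ hf i _ => congrFun hf i

theorem of_injective [AddMonoid G] [AddMonoid H] (hH : HasFiniteNTorsion H) {f : G →+ H}
    (hf : Function.Injective f) : HasFiniteNTorsion G := fun n hn =>
  ((hH n hn).preimage hf.injOn).subset fun x (hx : n • x = 0) => by simp [← map_nsmul, hx]

theorem directSum {ι : Type*} {C : ι → Type*} [∀ i, AddCommMonoid (C i)]
    (h : ∀ i, HasFiniteNTorsion (C i))
    (hsupp : ∀ n : ℕ, n ≠ 0 → {i | ∃ c : C i, c ≠ 0 ∧ n • c = 0}.Finite) :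
    HasFiniteNTorsion (DirectSum ι C) := by
  intro n hn
  set S := {i | ∃ c : C i, c ≠ 0 ∧ n • c = 0}
  have : Finite S := (hsupp n hn).to_subtype
  have hcomp : ∀ z : DirectSum ι C, n • z = 0 → ∀ i, n • z i = 0 := fun z hz i => by
    rw [← DirectSum.smul_apply, hz, DirectSum.zero_apply]
  refine Set.Finite.of_finite_image (f := fun z (i : S) => z i) ?_ ?_
  · exact (Set.Finite.pi fun i : S => h i n hn).subset <| by
      rintro _ ⟨z, hz, rfl⟩ i -
      exact hcomp z hz i
  · intro z hz w hw hzw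
    ext i
    by_cases hi : i ∈ S
    · exact congrFun hzw ⟨i, hi⟩
    · have h0 : ∀ c : C i, n • c = 0 → c = 0 := fun c hc => by_contra fun hc0 => hi ⟨c, hc0, hc⟩
      rw [h0 _ (hcomp z hz i), h0 _ (hcomp w hw i)]

end HasFiniteNTorsion

def IsAddPGroup (p : ℕ) (G : Type*) [AddMonoid G] : Prop :=
  ∀ x : G, ∃ k : ℕ, p ^ k • x = 0

theorem pow_nsmul_eq_zero_of_le {G : Type*} [AddMonoid G] {p a b : ℕ} (hab : a ≤ b) {x : G}
    (h : p ^ a • x = 0) : p ^ b • x = 0 := by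
  rw [← Nat.sub_add_cancel hab, pow_add, mul_comm, mul_nsmul, h, nsmul_zero]

namespace IsAddPGroup

variable {p : ℕ} {G H : Type*}

theorem prod [AddMonoid G] [AddMonoid H] (hG : IsAddPGroup p G) (hH : IsAddPGroup p H) :
    IsAddPGroup p (G × H) := fun c => by
  obtain ⟨a, ha⟩ := hG c.1
  obtain ⟨b, hb⟩ := hH c.2
  exact ⟨max a b, Prod.ext (pow_nsmul_eq_zero_of_le (le_max_left a b) ha)
    (pow_nsmul_eq_zero_of_le (le_max_right a b) hb)⟩

theorem pi {ι : Type*} [Finite ι] {G : ι → Type*} [∀ i, AddMonoid (G i)]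
    (h : ∀ i, IsAddPGroup p (G i)) : IsAddPGroup p (∀ i, G i) := fun f => by
  choose k hk using fun i => h i (f i)
  obtain ⟨K, hK⟩ := (Set.finite_range k).bddAbove
  exact ⟨K, funext fun i => pow_nsmul_eq_zero_of_le (hK ⟨i, rfl⟩) (hk i)⟩

theorem isAddTorsion [AddMonoid G] (hG : IsAddPGroup p G) (hp : p ≠ 0) : IsAddTorsion G :=
  fun x => by
    obtain ⟨k, hk⟩ := hG x
    exact isOfFinAddOrder_iff_nsmul_eq_zero.mpr ⟨p ^ k, pow_pos (Nat.pos_of_ne_zero hp) k, hk⟩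

theorem eq_zero_of_nsmul_eq_zero [AddMonoid G] (hG : IsAddPGroup p G) (hp : p.Prime) {n : ℕ}
    (hpn : ¬p ∣ n) {x : G} (hn : n • x = 0) : x = 0 := by
  obtain ⟨k, hk⟩ := hG x
  have hcop : (p ^ k).Coprime n := Nat.Coprime.pow_left k (hp.coprime_iff_not_dvd.mpr hpn)
  simpa [hcop] using gcd_nsmul_eq_zero.mpr ⟨hk, hn⟩

end IsAddPGroup

theorem HasFiniteNTorsion.directSum_primes {C : {p : ℕ // p.Prime} → Type*}
    [∀ p, AddCommMonoid (C p)] (h : ∀ p, HasFiniteNTorsion (C p))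
    (hprimary : ∀ p, IsAddPGroup p.1 (C p)) :
    HasFiniteNTorsion (DirectSum {p : ℕ // p.Prime} C) := by
  refine HasFiniteNTorsion.directSum h fun n hn => ?_
  refine ((Nat.divisors n).finite_toSet.preimage Subtype.val_injective.injOn).subset ?_
  rintro p ⟨c, hc0, hc⟩
  by_contra hpn
  exact hc0 ((hprimary p).eq_zero_of_nsmul_eq_zero p.2
    (fun hdvd => hpn (Nat.mem_divisors.mpr ⟨hdvd, hn⟩)) hc)

namespace PruferGroup

variable {p : ℕ} [Fact p.Prime]

theorem mk_eq_zero_iff (q : ℚ_[p]) : (QuotientAddGroup.mk q : PruferGroup p) = 0 ↔ ‖q‖ ≤ 1 :=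
  QuotientAddGroup.eq_zero_iff q

theorem isAddPGroup : IsAddPGroup p (PruferGroup p) := fun x => by
  obtain ⟨q, rfl⟩ := QuotientAddGroup.mk_surjective x
  have hp : (1 : ℝ) < p := by exact_mod_cast (Fact.out : p.Prime).one_lt
  obtain ⟨k, hk⟩ := pow_unbounded_of_one_lt ‖q‖ hp
  refine ⟨k, ?_⟩
  rw [← QuotientAddGroup.mk_nsmul, mk_eq_zero_iff, nsmul_eq_mul, norm_mul, Nat.cast_pow, norm_pow,
    Padic.norm_p, inv_pow, inv_mul_le_iff₀ (by positivity), mul_one]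
  exact hk.le

instance : DiscreteTopology (PruferGroup p) := by
  have hopen : IsOpen {x : ℚ_[p] | ‖x‖ ≤ 1} := by
    simpa using PadicInt.isOpenEmbedding_coe.isOpen_range
  exact QuotientAddGroup.discreteTopology hopen

-- The `n`-torsion is the image of the compact group `ℤ_p` under `z ↦ z / n`.
theorem hasFiniteNTorsion : HasFiniteNTorsion (PruferGroup p) := by
  intro n hn
  have hcont :
      Continuous fun z : ℤ_[p] => (QuotientAddGroup.mk ((z : ℚ_[p]) / n) : PruferGroup p) :=
    continuous_quot_mk.comp (continuous_subtype_val.div_const _)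
  refine ((isCompact_univ.image hcont).finite_of_discrete).subset ?_
  intro x (hx : n • x = 0)
  obtain ⟨q, rfl⟩ := QuotientAddGroup.mk_surjective x
  rw [← QuotientAddGroup.mk_nsmul, mk_eq_zero_iff, nsmul_eq_mul] at hx
  refine ⟨⟨n * q, hx⟩, trivial, ?_⟩
  simp [Nat.cast_ne_zero.mpr hn]

end PruferGroup

theorem DirectSum.isAddTorsion {ι : Type*} {C : ι → Type*} [∀ i, AddCommMonoid (C i)]
    (h : ∀ i, IsAddTorsion (C i)) : IsAddTorsion (DirectSum ι C) := by
  classical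
  intro z
  induction z using DirectSum.induction_on with
  | zero => exact IsOfFinAddOrder.zero
  | of i c => exact (DirectSum.of C i).isOfFinAddOrder (h i c)
  | add x y hx hy => exact hx.add hy

-- Every homomorphism sends `x` into the finite `(addOrderOf x)`-torsion of `N`.
theorem AddMonoidHom.isCompact_range_coe {M N : Type*} [AddMonoid M] [AddMonoid N]
    [TopologicalSpace N] [DiscreteTopology N] (hM : IsAddTorsion M) (hN : HasFiniteNTorsion N) :
    IsCompact (Set.range ((↑) : (M →+ N) → M → N)) := by
  have hK : IsCompact (Set.univ.pi fun x : M => {y : N | addOrderOf x • y = 0}) :=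
    isCompact_univ_pi fun x => (hN _ (hM x).addOrderOf_pos.ne').isCompact
  refine hK.of_isClosed_subset (AddMonoidHom.isClosed_range_coe M N) ?_
  rintro _ ⟨f, rfl⟩ x -
  change addOrderOf x • f x = 0
  rw [← map_nsmul, addOrderOf_nsmul_eq_zero, map_zero]

theorem AddMonoidHom.profinite_of_isAddTorsion {M N : Type*} [AddMonoid M] [AddMonoid N]
    (hM : IsAddTorsion M) (hN : HasFiniteNTorsion N) :
    letI : TopologicalSpace N := ⊥
    letI : TopologicalSpace (M →+ N) :=
      TopologicalSpace.induced (fun f => (f : M → N)) Pi.topologicalSpace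
    CompactSpace (M →+ N) ∧ T2Space (M →+ N) ∧ TotallyDisconnectedSpace (M →+ N) := by
  let : TopologicalSpace N := ⊥
  have : DiscreteTopology N := ⟨rfl⟩
  let : TopologicalSpace (M →+ N) :=
    TopologicalSpace.induced (fun f => (f : M → N)) Pi.topologicalSpace
  have hemb : IsEmbedding ((↑) : (M →+ N) → M → N) := ⟨⟨rfl⟩, DFunLike.coe_injective⟩
  refine ⟨⟨?_⟩, hemb.t2Space, ⟨?_⟩⟩
  · rw [hemb.isCompact_iff, Set.image_univ]
    exact isCompact_range_coe hM hN
  · exact hemb.isTotallyDisconnected (isTotallyDisconnected_of_totallyDisconnectedSpace _)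

theorem stmt_4_general (M N : Type) [AddCommGroup M] [AddCommGroup N]
    (F F' : {p : ℕ // p.Prime} → Type)
    [∀ p, AddCommGroup (F p)] [∀ p, Finite (F p)]
    [∀ p, AddCommGroup (F' p)] [∀ p, Finite (F' p)]
    (hF' : ∀ p, ∀ x : F' p, ∃ k : ℕ, (p.1 ^ k : ℕ) • x = 0)
    (r r' : {p : ℕ // p.Prime} → ℕ)
    (eM : Nonempty (M ≃+
      DirectSum {p : ℕ // p.Prime} (fun p => F p × (Fin (r p) → @PruferGroup p.1 ⟨p.2⟩))))
    (eN : Nonempty (N ≃+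
      DirectSum {p : ℕ // p.Prime} (fun p => F' p × (Fin (r' p) → @PruferGroup p.1 ⟨p.2⟩)))) :
    letI : TopologicalSpace N := ⊥
    letI : TopologicalSpace (M →+ N) :=
      TopologicalSpace.induced (fun f => (f : M → N)) Pi.topologicalSpace
    CompactSpace (M →+ N) ∧ T2Space (M →+ N) ∧ TotallyDisconnectedSpace (M →+ N) := by
  obtain ⟨eM⟩ := eM
  obtain ⟨eN⟩ := eN
  have hM : IsAddTorsion M := by
    have hD : IsAddTorsion
        (DirectSum {p : ℕ // p.Prime} (fun p => F p × (Fin (r p) → @PruferGroup p.1 ⟨p.2⟩))) :=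
      DirectSum.isAddTorsion fun p c => by
        have := Fact.mk p.2
        exact (isOfFinAddOrder_of_finite c.1).prod_mk
          ((IsAddPGroup.pi fun _ => PruferGroup.isAddPGroup).isAddTorsion p.2.ne_zero c.2)
    exact IsAddTorsion.of_surjective (f := eM.symm.toAddMonoidHom) eM.symm.surjective hD
  have hN : HasFiniteNTorsion N := by
    refine HasFiniteNTorsion.of_injective ?_ (f := eN.toAddMonoidHom) eN.injective
    refine HasFiniteNTorsion.directSum_primes (fun p => ?_) fun p => ?_
    · have := Fact.mk p.2
      exact HasFiniteNTorsion.of_finite.prod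
        (HasFiniteNTorsion.pi fun _ => PruferGroup.hasFiniteNTorsion)
    · have := Fact.mk p.2
      exact IsAddPGroup.prod (hF' p) (IsAddPGroup.pi fun _ => PruferGroup.isAddPGroup)
  exact AddMonoidHom.profinite_of_isAddTorsion hM hN

/-- If `M ≅ ⊕_p (F_p ⊕ (ℚ_p/ℤ_p)^{r_p})` and `N ≅ ⊕_p (F'_p ⊕ (ℚ_p/ℤ_p)^{r'_p})` with `F_p, F'_p`
finite abelian `p`-groups, then `Hom(M, N)` with the topology of pointwise convergence
(`N` discrete) is a profinite group. -/
theorem stmt_4 (M N : Type) [AddCommGroup M] [AddCommGroup N]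
    (F F' : {p : ℕ // p.Prime} → Type)
    [∀ p, AddCommGroup (F p)] [∀ p, Finite (F p)]
    [∀ p, AddCommGroup (F' p)] [∀ p, Finite (F' p)]
    (hF : ∀ p, ∀ x : F p, ∃ k : ℕ, (p.1 ^ k : ℕ) • x = 0)
    (hF' : ∀ p, ∀ x : F' p, ∃ k : ℕ, (p.1 ^ k : ℕ) • x = 0)
    (r r' : {p : ℕ // p.Prime} → ℕ)
    (eM : Nonempty (M ≃+
      DirectSum {p : ℕ // p.Prime} (fun p => F p × (Fin (r p) → @PruferGroup p.1 ⟨p.2⟩))))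
    (eN : Nonempty (N ≃+
      DirectSum {p : ℕ // p.Prime} (fun p => F' p × (Fin (r' p) → @PruferGroup p.1 ⟨p.2⟩)))) :
    letI : TopologicalSpace N := ⊥
    letI : TopologicalSpace (M →+ N) :=
      TopologicalSpace.induced (fun f => (f : M → N)) Pi.topologicalSpace
    CompactSpace (M →+ N) ∧ T2Space (M →+ N) ∧ TotallyDisconnectedSpace (M →+ N) :=
  stmt_4_general M N F F' hF' r r' eM eN
end

section
/- Let K be an algebraically closed field of characteristic zero and G a connected algebraic group over K. Then the group G(K) of K-points is generated by its divisible subgroups. In the special case G linear: every element of G(K) is a product of a semisimple element (lying in a torus, whose K-points form a divisible group) and unipotent elements (each lying in a subgroup isomorphic to 𝔾_a(K) = (K,+), which is divisible). -/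
/-!
Every invertible matrix is a product of invertible diagonal matrices and transvections. The
invertible diagonal matrices form the image of the torus `(Kˣ)ⁿ`, and the transvections at a fixed
position `(i, j)` the image of `𝔾_a(K) = (K, +)`. Both source groups are divisible, since `K` is
algebraically closed resp. of characteristic zero, and images of divisible groups are divisible.
-/

open Matrix Function

def Subgroup.IsDivisible {G : Type*} [Group G] (D : Subgroup G) : Prop :=
  ∀ d ∈ D, ∀ k : ℕ, 0 < k → ∃ e ∈ D, e ^ k = d

theorem MonoidHom.range_isDivisible {A G : Type*} [Group A] [Group G] (f : A →* G)
    (hA : ∀ k : ℕ, 0 < k → Surjective fun a : A => a ^ k) : f.range.IsDivisible := by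
  rintro _ ⟨a, rfl⟩ k hk
  obtain ⟨b, rfl⟩ := hA k hk a
  exact ⟨f b, ⟨b, rfl⟩, (map_pow f b k).symm⟩

theorem MonoidHom.mem_closure_divisible {A G : Type*} [Group A] [Group G] (f : A →* G)
    (hA : ∀ k : ℕ, 0 < k → Surjective fun a : A => a ^ k) (a : A) :
    f a ∈ Subgroup.closure (⋃ D ∈ {D : Subgroup G | D.IsDivisible}, (D : Set G)) :=
  Subgroup.subset_closure (Set.mem_biUnion (f.range_isDivisible hA) ⟨a, rfl⟩)

theorem Units.surjective_pow_of_isAlgClosed {K : Type*} [Field K] [IsAlgClosed K] {k : ℕ}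
    (hk : 0 < k) : Surjective fun u : Kˣ => u ^ k := by
  intro u
  obtain ⟨z, hz⟩ := IsAlgClosed.exists_pow_nat_eq (u : K) hk
  have hz0 : z ≠ 0 := by
    rintro rfl
    exact u.ne_zero (by rw [← hz, zero_pow hk.ne'])
  exact ⟨Units.mk0 z hz0, Units.ext (by simp [hz])⟩

theorem Multiplicative.surjective_pow {K : Type*} [DivisionRing K] [CharZero K] {k : ℕ}
    (hk : 0 < k) : Surjective fun t : Multiplicative K => t ^ k := by
  intro t
  refine ⟨Multiplicative.ofAdd (t.toAdd / k), ?_⟩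
  simp only [← ofAdd_nsmul, nsmul_eq_mul']
  rw [div_mul_cancel₀ _ (Nat.cast_ne_zero.mpr hk.ne')]
  rfl

namespace Matrix

variable (ι K : Type*) [Fintype ι] [DecidableEq ι]

def diagonalUnitsHom [CommRing K] : (ι → Kˣ) →* GL ι K :=
  ((diagonalRingHom ι K).toMonoidHom.comp ((Units.coeHom K).compLeft ι)).toHomUnits

variable {ι K}

@[simp]
theorem coe_diagonalUnitsHom [CommRing K] (d : ι → Kˣ) :
    (diagonalUnitsHom ι K d : Matrix ι ι K) = diagonal fun i => (d i : K) :=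
  rfl

def transvectionHom [CommRing K] {i j : ι} (hij : i ≠ j) : Multiplicative K →* GL ι K :=
  MonoidHom.toHomUnits
    { toFun := fun t => transvection i j t.toAdd
      map_one' := transvection_zero i j
      map_mul' := fun s t => (transvection_mul_transvection_same i j hij s.toAdd t.toAdd).symm }

theorem GeneralLinearGroup.eq_top_of_diagonal_transvection_mem [Field K] {H : Subgroup (GL ι K)}
    (hdiag : ∀ d, diagonalUnitsHom ι K d ∈ H)
    (htransvec : ∀ (i j : ι) (hij : i ≠ j) (t : Multiplicative K), transvectionHom hij t ∈ H) :
    H = ⊤ := by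
  rw [eq_top_iff]
  rintro g -
  obtain ⟨u, hu, hug⟩ : ∃ u ∈ H, (u : Matrix ι ι K) = g := by
    refine diagonal_transvection_induction_of_det_ne_zero
      (fun M => ∃ u ∈ H, (u : Matrix ι ι K) = M) _ g.det_ne_zero ?_ ?_ ?_
    · intro D hD
      have hD0 : ∀ i, D i ≠ 0 := by
        simpa [det_diagonal, Finset.prod_ne_zero_iff] using hD
      exact ⟨_, hdiag fun i => Units.mk0 (D i) (hD0 i), by simp⟩
    · intro t
      exact ⟨_, htransvec t.i t.j t.hij (Multiplicative.ofAdd t.c), rfl⟩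
    · rintro _ _ - - ⟨a, ha, rfl⟩ ⟨b, hb, rfl⟩
      exact ⟨a * b, H.mul_mem ha hb, rfl⟩
  rwa [← Units.ext hug]

end Matrix

/-- Over an algebraically closed field of characteristic zero, the group of `K`-points of a
connected linear algebraic group — here the general linear group `GL_n(K)` — is generated by
its divisible subgroups (every element is a product of a semisimple element, lying in a torus
with divisible group of points, and unipotent elements, each lying in a subgroup isomorphic to
`𝔾_a(K) = (K,+)`). -/
theorem stmt_18 (K : Type*) [Field K] [IsAlgClosed K] [CharZero K] (n : ℕ) :
    Subgroup.closure
        (⋃ D ∈ {D : Subgroup (GL (Fin n) K) |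
            ∀ d ∈ D, ∀ k : ℕ, 0 < k → ∃ e ∈ D, e ^ k = d},
          (D : Set (GL (Fin n) K))) = ⊤ := by
  refine GeneralLinearGroup.eq_top_of_diagonal_transvection_mem
    (fun d => ?_) (fun i j hij t => ?_)
  · exact MonoidHom.mem_closure_divisible _
      (fun k hk => Surjective.piMap fun _ => Units.surjective_pow_of_isAlgClosed hk) d
  · exact MonoidHom.mem_closure_divisible _ (fun k hk => Multiplicative.surjective_pow hk) t
end
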